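/- arXiv:2605.22910 — 2 statements merged into one kernel-verified Lean document; each statement's English description precedes it below -/
import Mathlib

section
/- Let A, B be commutative ℚ-algebras, φ : B → A a ring homomorphism, X a derivation of A, Y a derivation of B. Then X ∘ φ = φ ∘ Y (i.e. X and Y are φ-related) if and only if exp(τX) ∘ φ = φ̂ ∘ exp(τY) as maps B → A⟦τ⟧, where φ̂ : B⟦τ⟧ → A⟦τ⟧ is φ applied coefficientwise. -/
/-!
The flow `exp(τX)` is determined by the iterates of `X`, and `X ∘ φ = φ ∘ Y` propagates to all
iterates, which gives one direction coefficientwise. Conversely, the coefficient of `τ` in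
`exp(τX)(f)` is `X f`, so intertwining the flows recovers `X ∘ φ = φ ∘ Y`.
-/

/-- The formal flow `exp(τX)(f) = Σ_{ℓ≥0} (1/ℓ!) X^ℓ(f) τ^ℓ ∈ A⟦τ⟧`. -/
noncomputable def expFlow {A : Type*} [CommRing A] [Algebra ℚ A]
    (X : Derivation ℚ A A) (f : A) : PowerSeries A :=
  PowerSeries.mk fun ℓ => (ℓ.factorial : ℚ)⁻¹ • (⇑X)^[ℓ] f

section ExpFlow

variable {A B : Type*} [CommRing A] [CommRing B] [Algebra ℚ A] [Algebra ℚ B]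

theorem coeff_expFlow (X : Derivation ℚ A A) (f : A) (ℓ : ℕ) :
    PowerSeries.coeff ℓ (expFlow X f) = (ℓ.factorial : ℚ)⁻¹ • (⇑X)^[ℓ] f :=
  PowerSeries.coeff_mk _ _

theorem coeff_one_expFlow (X : Derivation ℚ A A) (f : A) :
    PowerSeries.coeff 1 (expFlow X f) = X f := by
  simp [coeff_expFlow]

theorem map_expFlow_of_semiconj (φ : B →+* A) {X : Derivation ℚ A A} {Y : Derivation ℚ B B}
    (h : Function.Semiconj φ Y X) (b : B) :
    PowerSeries.map φ (expFlow Y b) = expFlow X (φ b) := by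
  ext ℓ
  rw [PowerSeries.coeff_map, coeff_expFlow, coeff_expFlow, map_rat_smul,
    (h.iterate_right ℓ).eq]

end ExpFlow

/-- For commutative ℚ-algebras `A, B`, a ring homomorphism `φ : B → A`, and derivations
`X` of `A` and `Y` of `B`: `X` and `Y` are `φ`-related (`X ∘ φ = φ ∘ Y`) iff
`exp(τX) ∘ φ = φ̂ ∘ exp(τY)`, where `φ̂` is `φ` applied coefficientwise. -/
theorem related_iff_flows_intertwined {A B : Type*} [CommRing A] [CommRing B]
    [Algebra ℚ A] [Algebra ℚ B] (φ : B →+* A)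
    (X : Derivation ℚ A A) (Y : Derivation ℚ B B) :
    (∀ b : B, X (φ b) = φ (Y b)) ↔
    (∀ b : B, expFlow X (φ b) = PowerSeries.map φ (expFlow Y b)) := by
  constructor
  · intro h b
    exact (map_expFlow_of_semiconj φ (fun b => (h b).symm) b).symm
  · intro h b
    have hτ := congrArg (PowerSeries.coeff 1) (h b)
    rwa [PowerSeries.coeff_map, coeff_one_expFlow, coeff_one_expFlow] at hτ
end

section
/- Let I ⊆ ℝ be an open interval, t₀ ∈ I, and A : I → M_n(ℝ) a continuous matrix-valued function. Then there exists a unique differentiable Φ : I → M_n(ℝ) such that Φ'(t) = A(t)·Φ(t) for all t ∈ I and Φ(t₀) = 1 (the identity matrix), and moreover Φ(t) is invertible for every t ∈ I. -/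
open Matrix Set Filter

namespace FundSolAux

variable {n : ℕ}

/-- The linear vector field `x ↦ B * x` on `Fin n → Fin n → ℝ`, written entrywise. -/
def odeW (B : Matrix (Fin n) (Fin n) ℝ) (x : Fin n → Fin n → ℝ) : Fin n → Fin n → ℝ :=
  fun i j => ∑ k, B i k * x k j

lemma odeW_sub (B : Matrix (Fin n) (Fin n) ℝ) (x y : Fin n → Fin n → ℝ) :
    odeW B x - odeW B y = odeW B (x - y) := by
  funext i j
  simp only [odeW, Pi.sub_apply, mul_sub]
  rw [Finset.sum_sub_distrib]

lemma abs_le_norm (x : Fin n → Fin n → ℝ) (i j : Fin n) : |x i j| ≤ ‖x‖ := by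
  calc |x i j| = ‖x i j‖ := (Real.norm_eq_abs _).symm
    _ ≤ ‖x i‖ := norm_le_pi_norm (x i) j
    _ ≤ ‖x‖ := norm_le_pi_norm x i

lemma norm_odeW_le {B : Matrix (Fin n) (Fin n) ℝ} {M : ℝ} (hM0 : 0 ≤ M)
    (hM : ∀ i k, |B i k| ≤ M) (x : Fin n → Fin n → ℝ) :
    ‖odeW B x‖ ≤ (n : ℝ) * M * ‖x‖ := by
  have h0 : (0 : ℝ) ≤ (n : ℝ) * M * ‖x‖ := by positivity
  rw [pi_norm_le_iff_of_nonneg h0]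
  intro i
  rw [pi_norm_le_iff_of_nonneg h0]
  intro j
  rw [Real.norm_eq_abs]
  calc |∑ k, B i k * x k j| ≤ ∑ k, |B i k * x k j| := Finset.abs_sum_le_sum_abs _ _
    _ ≤ ∑ _k : Fin n, M * ‖x‖ := by
        refine Finset.sum_le_sum fun k _ => ?_
        rw [abs_mul]
        exact mul_le_mul (hM i k) (abs_le_norm x k j) (abs_nonneg _) hM0
    _ = (n : ℝ) * M * ‖x‖ := by
        rw [Finset.sum_const, Finset.card_univ, Fintype.card_fin, nsmul_eq_mul, mul_assoc]

lemma lipschitz_odeW {B : Matrix (Fin n) (Fin n) ℝ} {M : ℝ} (hM0 : 0 ≤ M)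
    (hM : ∀ i k, |B i k| ≤ M) :
    LipschitzWith (Real.toNNReal ((n : ℝ) * M)) (odeW B) := by
  apply LipschitzWith.of_dist_le_mul
  intro x y
  rw [dist_eq_norm, dist_eq_norm, odeW_sub, Real.coe_toNNReal _ (by positivity)]
  exact norm_odeW_le hM0 hM _

lemma exists_entry_bound {A : ℝ → Matrix (Fin n) (Fin n) ℝ} {s : Set ℝ} (hs : IsCompact s)
    (hA : ContinuousOn A s) :
    ∃ M : ℝ, 0 ≤ M ∧ ∀ t ∈ s, ∀ i k, |A t i k| ≤ M := by
  have hcont : Continuous fun B : Matrix (Fin n) (Fin n) ℝ => ∑ i, ∑ k, |B i k| :=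
    continuous_finset_sum _ fun i _ => continuous_finset_sum _ fun k _ =>
      (continuous_id.matrix_elem i k).abs
  obtain ⟨C, hC⟩ := hs.exists_bound_of_continuousOn (hcont.comp_continuousOn hA)
  refine ⟨max C 0, le_max_right _ _, fun t ht i k => ?_⟩
  have h1 : |A t i k| ≤ ∑ k', |A t i k'| :=
    Finset.single_le_sum (f := fun k' => |A t i k'|) (fun k' _ => abs_nonneg _)
      (Finset.mem_univ k)
  have h2 : (∑ k', |A t i k'|) ≤ ∑ i', ∑ k', |A t i' k'| :=
    Finset.single_le_sum (f := fun i' => ∑ k', |A t i' k'|)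
      (fun i' _ => Finset.sum_nonneg fun k' _ => abs_nonneg _) (Finset.mem_univ i)
  have h3 := hC t ht
  rw [Real.norm_eq_abs] at h3
  have h4 : (∑ i', ∑ k', |A t i' k'|) ≤ C := (le_abs_self _).trans h3
  exact h1.trans (h2.trans (h4.trans (le_max_left _ _)))

lemma within_Icc_Ici {f : ℝ → Fin n → Fin n → ℝ} {d : Fin n → Fin n → ℝ} {a b t : ℝ}
    (h : HasDerivWithinAt f d (Icc a b) t) (ht : t ∈ Ico a b) :
    HasDerivWithinAt f d (Ici t) t := by
  apply h.mono_of_mem_nhdsWithin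
  filter_upwards [mem_nhdsWithin_of_mem_nhds (Iic_mem_nhds ht.2), self_mem_nhdsWithin]
    with s hs1 hs2
  exact ⟨le_trans ht.1 hs2, hs1⟩

lemma within_Icc_Iic {f : ℝ → Fin n → Fin n → ℝ} {d : Fin n → Fin n → ℝ} {a b t : ℝ}
    (h : HasDerivWithinAt f d (Icc a b) t) (ht : t ∈ Ioc a b) :
    HasDerivWithinAt f d (Iic t) t := by
  apply h.mono_of_mem_nhdsWithin
  filter_upwards [mem_nhdsWithin_of_mem_nhds (Ici_mem_nhds ht.1), self_mem_nhdsWithin]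
    with s hs1 hs2
  exact ⟨hs1, le_trans hs2 ht.2⟩

lemma glue_sol {A : ℝ → Matrix (Fin n) (Fin n) ℝ} {f g : ℝ → Fin n → Fin n → ℝ} {a c b : ℝ}
    (hac : a ≤ c) (hcb : c ≤ b)
    (hf : ∀ t ∈ Icc a c, HasDerivWithinAt f (odeW (A t) (f t)) (Icc a c) t)
    (hg : ∀ t ∈ Icc c b, HasDerivWithinAt g (odeW (A t) (g t)) (Icc c b) t)
    (hfg : f c = g c) :
    ∃ h : ℝ → Fin n → Fin n → ℝ, EqOn h f (Icc a c) ∧ EqOn h g (Icc c b) ∧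
      ∀ t ∈ Icc a b, HasDerivWithinAt h (odeW (A t) (h t)) (Icc a b) t := by
  classical
  set h : ℝ → Fin n → Fin n → ℝ := fun t => if t < c then f t else g t with hh
  have heqf : EqOn h f (Icc a c) := by
    intro t ht
    by_cases h1 : t < c
    · simp [hh, h1]
    · have h2 : t = c := le_antisymm ht.2 (not_lt.1 h1)
      simp [hh, h2, hfg]
  have heqg : EqOn h g (Icc c b) := by
    intro t ht
    simp [hh, not_lt.2 ht.1]
  refine ⟨h, heqf, heqg, fun t ht => ?_⟩
  have d1 : HasDerivWithinAt h (odeW (A t) (h t)) (Icc a c) t := by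
    by_cases h1 : t ∈ Icc a c
    · have h2 := (hf t h1).congr heqf (heqf h1)
      rwa [← heqf h1] at h2
    · exact hasDerivWithinAt_iff_hasFDerivWithinAt.2
        (HasFDerivWithinAt.of_notMem_closure (by rwa [closure_Icc]))
  have d2 : HasDerivWithinAt h (odeW (A t) (h t)) (Icc c b) t := by
    by_cases h1 : t ∈ Icc c b
    · have h2 := (hg t h1).congr heqg (heqg h1)
      rwa [← heqg h1] at h2
    · exact hasDerivWithinAt_iff_hasFDerivWithinAt.2
        (HasFDerivWithinAt.of_notMem_closure (by rwa [closure_Icc]))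
  have := d1.union d2
  rwa [Icc_union_Icc_eq_Icc hac hcb] at this

lemma exists_sol_fwd {A : ℝ → Matrix (Fin n) (Fin n) ℝ} {a b : ℝ} (hab : a ≤ b)
    (hA : ContinuousOn A (Icc a b)) (x₀ : Fin n → Fin n → ℝ) :
    ∃ f : ℝ → Fin n → Fin n → ℝ, f a = x₀ ∧
      ∀ t ∈ Icc a b, HasDerivWithinAt f (odeW (A t) (f t)) (Icc a b) t := by
  obtain ⟨M, hM0, hM⟩ := exists_entry_bound isCompact_Icc hA
  set K : ℝ := (n : ℝ) * M with hK
  have hK0 : 0 ≤ K := by positivity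
  set B : ℝ := (‖x₀‖ + 1) * Real.exp (K * (b - a)) with hBdef
  have hBpos : 0 < B := by positivity
  -- a priori bound for partial solutions
  have apriori : ∀ c ∈ Icc a b, ∀ f : ℝ → Fin n → Fin n → ℝ, f a = x₀ →
      (∀ t ∈ Icc a c, HasDerivWithinAt f (odeW (A t) (f t)) (Icc a c) t) →
      ∀ t ∈ Icc a c, ‖f t‖ ≤ B := by
    intro c hc f hfa hf t ht
    have hsub : Icc a c ⊆ Icc a b := Icc_subset_Icc le_rfl hc.2
    have hcont : ContinuousOn f (Icc a c) := fun s hs => (hf s hs).continuousWithinAt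
    have hbd := norm_le_gronwallBound_of_norm_deriv_right_le
      (f' := fun s => odeW (A s) (f s)) (δ := ‖x₀‖) (K := K) (ε := 0) hcont
      (fun s hs => within_Icc_Ici (hf s (Ico_subset_Icc_self hs)) hs)
      (le_of_eq (by rw [hfa]))
      (fun s hs => by
        rw [add_zero]
        exact norm_odeW_le hM0 (hM s (hsub (Ico_subset_Icc_self hs))) (f s))
      t ht
    rw [gronwallBound_ε0] at hbd
    have h2 : Real.exp (K * (t - a)) ≤ Real.exp (K * (b - a)) :=
      Real.exp_le_exp.2 (by nlinarith [ht.2, hc.2])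
    calc ‖f t‖ ≤ ‖x₀‖ * Real.exp (K * (t - a)) := hbd
      _ ≤ (‖x₀‖ + 1) * Real.exp (K * (b - a)) := by
          have := Real.exp_pos (K * (t - a))
          nlinarith [norm_nonneg x₀]
      _ = B := rfl
  set C : ℝ := K * (2 * B + 1) + 1 with hCdef
  have hC : 0 < C := by nlinarith
  set ε : ℝ := (B + 1) / C with hεdef
  have hε : 0 < ε := div_pos (by linarith) hC
  -- one step of Picard-Lindelöf
  have step : ∀ c ∈ Ico a b, ∀ y : Fin n → Fin n → ℝ, ‖y‖ ≤ B →
      ∃ g : ℝ → Fin n → Fin n → ℝ, g c = y ∧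
        ∀ t ∈ Icc c (min b (c + ε)),
          HasDerivWithinAt g (odeW (A t) (g t)) (Icc c (min b (c + ε))) t := by
    intro c hc y hy
    have hcd : c ≤ min b (c + ε) := le_min hc.2.le (by linarith)
    have hsub : Icc c (min b (c + ε)) ⊆ Icc a b := Icc_subset_Icc hc.1 (min_le_left _ _)
    have hpl : IsPicardLindelof (fun t x => odeW (A t) x) (tmin := c) (tmax := min b (c + ε))
        ⟨c, le_rfl, hcd⟩ y (Real.toNNReal (B + 1)) 0 (Real.toNNReal C) (Real.toNNReal K) :=
      { lipschitzOnWith := fun t ht => (lipschitz_odeW hM0 (hM t (hsub ht))).lipschitzOnWith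
        continuousOn := fun x _hx => by
          have hcont : Continuous fun Bm : Matrix (Fin n) (Fin n) ℝ => odeW Bm x :=
            continuous_pi fun i => continuous_pi fun j =>
              continuous_finset_sum _ fun k _ =>
                (continuous_id.matrix_elem i k).mul continuous_const
          exact hcont.comp_continuousOn (hA.mono hsub)
        norm_le := fun t ht x hx => by
          rw [Real.coe_toNNReal _ (by linarith : (0:ℝ) ≤ B + 1)] at hx
          rw [Real.coe_toNNReal _ hC.le]
          have h1 : ‖x‖ ≤ 2 * B + 1 := by
            have h2 : ‖x - y‖ ≤ B + 1 := by
              rw [← dist_eq_norm]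
              exact Metric.mem_closedBall.1 hx
            calc ‖x‖ = ‖y + (x - y)‖ := by rw [add_sub_cancel]
              _ ≤ ‖y‖ + ‖x - y‖ := norm_add_le _ _
              _ ≤ 2 * B + 1 := by linarith
          calc ‖odeW (A t) x‖ ≤ K * ‖x‖ := norm_odeW_le hM0 (hM t (hsub ht)) x
            _ ≤ K * (2 * B + 1) := mul_le_mul_of_nonneg_left h1 hK0
            _ ≤ C := by linarith
        mul_max_le := by
          simp only [NNReal.coe_zero, sub_zero, Real.coe_toNNReal _ hC.le,
            Real.coe_toNNReal _ (by linarith : (0:ℝ) ≤ B + 1)]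
          show C * max (min b (c + ε) - c) (c - c) ≤ B + 1
          have h1 : max (min b (c + ε) - c) (c - c) = min b (c + ε) - c := by
            rw [sub_self]
            exact max_eq_left (by linarith)
          rw [h1]
          have h2 : min b (c + ε) - c ≤ ε := by
            linarith [min_le_right b (c + ε)]
          calc C * (min b (c + ε) - c) ≤ C * ε := mul_le_mul_of_nonneg_left h2 hC.le
            _ = B + 1 := by rw [hεdef, mul_div_cancel₀ _ hC.ne'] }
    obtain ⟨g, hg0, hg⟩ := IsPicardLindelof.exists_eq_forall_mem_Icc_hasDerivWithinAt₀ hpl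
    exact ⟨g, hg0, hg⟩
  -- induction on the number of steps
  have key : ∀ k : ℕ, ∃ f : ℝ → Fin n → Fin n → ℝ, f a = x₀ ∧
      ∀ t ∈ Icc a (min b (a + (k : ℝ) * ε)),
        HasDerivWithinAt f (odeW (A t) (f t)) (Icc a (min b (a + (k : ℝ) * ε))) t := by
    intro k
    induction k with
    | zero =>
      refine ⟨fun _ => x₀, rfl, ?_⟩
      have e1 : min b (a + ((0 : ℕ) : ℝ) * ε) = a := by
        rw [Nat.cast_zero, zero_mul, add_zero, min_eq_right hab]
      rw [e1]
      intro t ht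
      rw [Icc_self] at ht ⊢
      rw [mem_singleton_iff] at ht
      subst ht
      rw [hasDerivWithinAt_iff_tendsto_slope, Set.diff_self, nhdsWithin_empty]
      exact tendsto_bot
    | succ k ih =>
      obtain ⟨f, hfa, hf⟩ := ih
      have hkε : (0 : ℝ) ≤ (k : ℝ) * ε := by positivity
      have hca : a ≤ min b (a + (k : ℝ) * ε) := le_min hab (by linarith)
      rcases le_or_gt b (a + (k : ℝ) * ε) with hb1 | hb1
      · have e1 : min b (a + (k : ℝ) * ε) = b := min_eq_left hb1
        have e2 : min b (a + ((k + 1 : ℕ) : ℝ) * ε) = b := by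
          apply min_eq_left
          push_cast
          nlinarith
        rw [e1] at hf
        rw [e2]
        exact ⟨f, hfa, hf⟩
      · have e1 : min b (a + (k : ℝ) * ε) = a + (k : ℝ) * ε := min_eq_right hb1.le
        have hcmem : min b (a + (k : ℝ) * ε) ∈ Ico a b := ⟨hca, by rw [e1]; exact hb1⟩
        have hfc : ‖f (min b (a + (k : ℝ) * ε))‖ ≤ B :=
          apriori _ ⟨hca, hcmem.2.le⟩ f hfa hf _ ⟨hca, le_rfl⟩
        obtain ⟨g, hgc, hg⟩ := step _ hcmem _ hfc
        have hcd : min b (a + (k : ℝ) * ε) ≤ min b (min b (a + (k : ℝ) * ε) + ε) :=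
          le_min hcmem.2.le (by linarith)
        obtain ⟨h, h1, h2, h3⟩ := glue_sol hca hcd hf hg hgc.symm
        have e2 : min b (min b (a + (k : ℝ) * ε) + ε) = min b (a + ((k + 1 : ℕ) : ℝ) * ε) := by
          rw [e1]
          congr 1
          push_cast
          ring
        refine ⟨h, ?_, ?_⟩
        · rw [h1 (left_mem_Icc.2 hca), hfa]
        · rw [← e2]
          exact h3
  obtain ⟨k, hk⟩ := exists_nat_ge ((b - a) / ε)
  obtain ⟨f, hfa, hf⟩ := key k
  have hmin : min b (a + (k : ℝ) * ε) = b := by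
    apply min_eq_left
    rw [div_le_iff₀ hε] at hk
    linarith
  rw [hmin] at hf
  exact ⟨f, hfa, hf⟩

lemma exists_sol_two {A : ℝ → Matrix (Fin n) (Fin n) ℝ} {a b t₀ : ℝ} (ht₀ : t₀ ∈ Icc a b)
    (hA : ContinuousOn A (Icc a b)) (x₀ : Fin n → Fin n → ℝ) :
    ∃ f : ℝ → Fin n → Fin n → ℝ, f t₀ = x₀ ∧
      ∀ t ∈ Icc a b, HasDerivWithinAt f (odeW (A t) (f t)) (Icc a b) t := by
  obtain ⟨g, hg0, hg⟩ := exists_sol_fwd ht₀.2 (hA.mono (Icc_subset_Icc ht₀.1 le_rfl)) x₀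
  set A' : ℝ → Matrix (Fin n) (Fin n) ℝ := fun s => -A (-s) with hA'
  have hA'c : ContinuousOn A' (Icc (-t₀) (-a)) := by
    have hc1 : Continuous fun B : Matrix (Fin n) (Fin n) ℝ => -B :=
      continuous_pi fun i => continuous_pi fun j => ((continuous_id.matrix_elem i j)).neg
    apply hc1.comp_continuousOn
    apply hA.comp continuous_neg.continuousOn
    intro s hs
    simp only [Set.mem_Icc] at hs ⊢
    constructor
    · linarith [hs.2]
    · linarith [hs.1, ht₀.2]
  obtain ⟨g₂, hg₂0, hg₂⟩ := exists_sol_fwd (neg_le_neg ht₀.1) hA'c x₀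
  have hhd : ∀ t ∈ Icc a t₀,
      HasDerivWithinAt (fun t => g₂ (-t)) (odeW (A t) (g₂ (-t))) (Icc a t₀) t := by
    intro t ht
    have hmt : -t ∈ Icc (-t₀) (-a) := ⟨neg_le_neg ht.2, neg_le_neg ht.1⟩
    have hmaps : MapsTo (fun s : ℝ => -s) (Icc a t₀) (Icc (-t₀) (-a)) :=
      fun s hs => ⟨neg_le_neg hs.2, neg_le_neg hs.1⟩
    have hcomp := HasDerivWithinAt.scomp t (hg₂ (-t) hmt)
      ((hasDerivAt_neg t).hasDerivWithinAt) hmaps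
    have hval : (-1 : ℝ) • odeW (A' (-t)) (g₂ (-t)) = odeW (A t) (g₂ (-t)) := by
      funext i j
      simp only [odeW, hA', Pi.smul_apply, smul_eq_mul, Matrix.neg_apply, neg_neg]
      rw [Finset.mul_sum]
      refine Finset.sum_congr rfl fun k _ => ?_
      ring
    rw [hval] at hcomp
    exact hcomp
  have hfg : (fun t => g₂ (-t)) t₀ = g t₀ := by
    simp only
    rw [hg₂0, hg0]
  obtain ⟨F, h1, h2, h3⟩ := glue_sol ht₀.1 ht₀.2 hhd hg hfg
  refine ⟨F, ?_, h3⟩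
  rw [h2 ⟨le_rfl, ht₀.2⟩, hg0]

lemma sol_unique {A : ℝ → Matrix (Fin n) (Fin n) ℝ} {a b t₀ : ℝ} (ht₀ : t₀ ∈ Icc a b)
    (hA : ContinuousOn A (Icc a b)) {f g : ℝ → Fin n → Fin n → ℝ}
    (hf : ∀ t ∈ Icc a b, HasDerivWithinAt f (odeW (A t) (f t)) (Icc a b) t)
    (hg : ∀ t ∈ Icc a b, HasDerivWithinAt g (odeW (A t) (g t)) (Icc a b) t)
    (heq : f t₀ = g t₀) : EqOn f g (Icc a b) := by
  obtain ⟨M, hM0, hM⟩ := exists_entry_bound isCompact_Icc hA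
  have hab : a ≤ b := ht₀.1.trans ht₀.2
  set π : ℝ → ℝ := fun t => max a (min t b) with hπ
  have hπ_mem : ∀ t, π t ∈ Icc a b := fun t => ⟨le_max_left _ _, max_le hab (min_le_right _ _)⟩
  have hπ_eq : ∀ t ∈ Icc a b, π t = t := by
    intro t ht
    simp only [hπ]
    rw [min_eq_left ht.2, max_eq_right ht.1]
  set v : ℝ → (Fin n → Fin n → ℝ) → Fin n → Fin n → ℝ := fun t x => odeW (A (π t)) x with hv
  have hlip : ∀ t, LipschitzOnWith (Real.toNNReal ((n : ℝ) * M)) (v t)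
      (univ : Set (Fin n → Fin n → ℝ)) :=
    fun t => (lipschitz_odeW hM0 (hM _ (hπ_mem t))).lipschitzOnWith
  have hfv : ∀ t ∈ Icc a b, HasDerivWithinAt f (v t (f t)) (Icc a b) t := by
    intro t ht
    simp only [hv, hπ_eq t ht]
    exact hf t ht
  have hgv : ∀ t ∈ Icc a b, HasDerivWithinAt g (v t (g t)) (Icc a b) t := by
    intro t ht
    simp only [hv, hπ_eq t ht]
    exact hg t ht
  have hsub1 : Icc t₀ b ⊆ Icc a b := Icc_subset_Icc ht₀.1 le_rfl
  have hsub2 : Icc a t₀ ⊆ Icc a b := Icc_subset_Icc le_rfl ht₀.2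
  have right : EqOn f g (Icc t₀ b) := by
    apply ODE_solution_unique_of_mem_Icc_right (v := v) (s := fun _ => univ) (fun t _ => hlip t)
      (fun t ht => ((hfv t (hsub1 ht)).continuousWithinAt).mono hsub1)
      (fun t ht => within_Icc_Ici (hfv t (hsub1 (Ico_subset_Icc_self ht)))
        ⟨ht₀.1.trans ht.1, ht.2⟩)
      (fun _ _ => mem_univ _)
      (fun t ht => ((hgv t (hsub1 ht)).continuousWithinAt).mono hsub1)
      (fun t ht => within_Icc_Ici (hgv t (hsub1 (Ico_subset_Icc_self ht)))
        ⟨ht₀.1.trans ht.1, ht.2⟩)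
      (fun _ _ => mem_univ _)
      heq
  have left : EqOn f g (Icc a t₀) := by
    apply ODE_solution_unique_of_mem_Icc_left (v := v) (s := fun _ => univ) (fun t _ => hlip t)
      (fun t ht => ((hfv t (hsub2 ht)).continuousWithinAt).mono hsub2)
      (fun t ht => within_Icc_Iic (hfv t (hsub2 (Ioc_subset_Icc_self ht)))
        ⟨ht.1, ht.2.trans ht₀.2⟩)
      (fun _ _ => mem_univ _)
      (fun t ht => ((hgv t (hsub2 ht)).continuousWithinAt).mono hsub2)
      (fun t ht => within_Icc_Iic (hgv t (hsub2 (Ioc_subset_Icc_self ht)))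
        ⟨ht.1, ht.2.trans ht₀.2⟩)
      (fun _ _ => mem_univ _)
      heq
  have := left.union right
  rwa [Icc_union_Icc_eq_Icc ht₀.1 ht₀.2] at this

lemma min_max_mem {I : Set ℝ} {t t₀ : ℝ} (ht : t ∈ I) (ht₀ : t₀ ∈ I) :
    min t t₀ ∈ I ∧ max t t₀ ∈ I := by
  constructor
  · rcases min_choice t t₀ with h | h <;> rw [h] <;> assumption
  · rcases max_choice t t₀ with h | h <;> rw [h] <;> assumption

lemma unique_global {I : Set ℝ} (hIconn : I.OrdConnected) {t₀ : ℝ} (ht₀ : t₀ ∈ I)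
    {A : ℝ → Matrix (Fin n) (Fin n) ℝ} (hA : ContinuousOn A I)
    {f g : ℝ → Fin n → Fin n → ℝ}
    (hf : ∀ t ∈ I, HasDerivAt f (odeW (A t) (f t)) t)
    (hg : ∀ t ∈ I, HasDerivAt g (odeW (A t) (g t)) t)
    (heq : f t₀ = g t₀) : ∀ t ∈ I, f t = g t := by
  intro t ht
  obtain ⟨hmin, hmax⟩ := min_max_mem ht ht₀
  have hsub : Icc (min t t₀) (max t t₀) ⊆ I := hIconn.out hmin hmax
  exact sol_unique ⟨min_le_right _ _, le_max_right _ _⟩ (hA.mono hsub)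
    (fun s hs => (hf s (hsub hs)).hasDerivWithinAt)
    (fun s hs => (hg s (hsub hs)).hasDerivWithinAt) heq
    ⟨min_le_left _ _, le_max_left _ _⟩

lemma exists_global {I : Set ℝ} (hIopen : IsOpen I) (hIconn : I.OrdConnected) {t₀ : ℝ}
    (ht₀ : t₀ ∈ I) {A : ℝ → Matrix (Fin n) (Fin n) ℝ} (hA : ContinuousOn A I) :
    ∃ Φ : ℝ → Fin n → Fin n → ℝ, Φ t₀ = (1 : Matrix (Fin n) (Fin n) ℝ) ∧
      ∀ t ∈ I, HasDerivAt Φ (odeW (A t) (Φ t)) t := by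
  classical
  have main : ∀ a b : ℝ, ∃ f : ℝ → Fin n → Fin n → ℝ,
      (a ∈ I ∧ b ∈ I ∧ a ≤ t₀ ∧ t₀ ≤ b) →
      (f t₀ = (1 : Matrix (Fin n) (Fin n) ℝ) ∧
        ∀ t ∈ Icc a b, HasDerivWithinAt f (odeW (A t) (f t)) (Icc a b) t) := by
    intro a b
    by_cases h : a ∈ I ∧ b ∈ I ∧ a ≤ t₀ ∧ t₀ ≤ b
    · obtain ⟨f, h1, h2⟩ := exists_sol_two (A := A)
        (show t₀ ∈ Icc a b from ⟨h.2.2.1, h.2.2.2⟩)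
        (hA.mono (hIconn.out h.1 h.2.1)) (1 : Matrix (Fin n) (Fin n) ℝ)
      exact ⟨f, fun _ => ⟨h1, h2⟩⟩
    · exact ⟨fun _ => 0, fun hc => absurd hc h⟩
  choose F hF using main
  set Φ : ℝ → Fin n → Fin n → ℝ :=
    fun t => if t ∈ I then F (min t t₀) (max t t₀) t else 0 with hΦdef
  have hhyp : ∀ t ∈ I, (min t t₀ ∈ I ∧ max t t₀ ∈ I ∧ min t t₀ ≤ t₀ ∧ t₀ ≤ max t t₀) := by
    intro t ht
    obtain ⟨h1, h2⟩ := min_max_mem ht ht₀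
    exact ⟨h1, h2, min_le_right _ _, le_max_right _ _⟩
  -- consistency of Φ with any solution
  have key : ∀ a b : ℝ, (a ∈ I ∧ b ∈ I ∧ a ≤ t₀ ∧ t₀ ≤ b) →
      ∀ g : ℝ → Fin n → Fin n → ℝ, g t₀ = (1 : Matrix (Fin n) (Fin n) ℝ) →
      (∀ s ∈ Icc a b, HasDerivWithinAt g (odeW (A s) (g s)) (Icc a b) s) →
      ∀ t ∈ Icc a b, Φ t = g t := by
    intro a b h g hg1 hg' t ht
    have htI : t ∈ I := hIconn.out h.1 h.2.1 ht
    have hsub : Icc (min t t₀) (max t t₀) ⊆ Icc a b :=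
      Icc_subset_Icc (le_min ht.1 h.2.2.1) (max_le ht.2 h.2.2.2)
    obtain ⟨hF1, hF2⟩ := hF (min t t₀) (max t t₀) (hhyp t htI)
    have hAab : ContinuousOn A (Icc (min t t₀) (max t t₀)) :=
      hA.mono (hsub.trans (hIconn.out h.1 h.2.1))
    have huniq := sol_unique (show t₀ ∈ Icc (min t t₀) (max t t₀) from
        ⟨min_le_right _ _, le_max_right _ _⟩) hAab hF2
      (fun s hs => (hg' s (hsub hs)).mono hsub) (by rw [hF1, hg1])
    have hΦt : Φ t = F (min t t₀) (max t t₀) t := if_pos htI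
    rw [hΦt]
    exact huniq ⟨min_le_left _ _, le_max_left _ _⟩
  refine ⟨Φ, ?_, ?_⟩
  · have hΦt : Φ t₀ = F (min t₀ t₀) (max t₀ t₀) t₀ := if_pos ht₀
    rw [hΦt]
    exact (hF (min t₀ t₀) (max t₀ t₀) (hhyp t₀ ht₀)).1
  · intro t ht
    obtain ⟨hminI, hmaxI⟩ := min_max_mem ht ht₀
    obtain ⟨ε₁, hε₁, hball₁⟩ := Metric.isOpen_iff.mp hIopen (min t t₀) hminI
    obtain ⟨ε₂, hε₂, hball₂⟩ := Metric.isOpen_iff.mp hIopen (max t t₀) hmaxI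
    set a : ℝ := min t t₀ - ε₁ / 2 with hadef
    set b : ℝ := max t t₀ + ε₂ / 2 with hbdef
    have haI : a ∈ I := by
      apply hball₁
      rw [Metric.mem_ball, Real.dist_eq, hadef]
      rw [show min t t₀ - ε₁ / 2 - min t t₀ = -(ε₁ / 2) by ring, abs_neg,
        abs_of_pos (by linarith)]
      linarith
    have hbI : b ∈ I := by
      apply hball₂
      rw [Metric.mem_ball, Real.dist_eq, hbdef]
      rw [show max t t₀ + ε₂ / 2 - max t t₀ = ε₂ / 2 by ring, abs_of_pos (by linarith)]
      linarith
    have hat : a < t := by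
      have := min_le_left t t₀
      simp only [hadef]
      linarith
    have hat₀ : a ≤ t₀ := by
      have := min_le_right t t₀
      simp only [hadef]
      linarith
    have htb : t < b := by
      have := le_max_left t t₀
      simp only [hbdef]
      linarith
    have ht₀b : t₀ ≤ b := by
      have := le_max_right t t₀
      simp only [hbdef]
      linarith
    obtain ⟨g, hg1, hg2⟩ := exists_sol_two (A := A)
      (show t₀ ∈ Icc a b from ⟨hat₀, ht₀b⟩)
      (hA.mono (hIconn.out haI hbI)) (1 : Matrix (Fin n) (Fin n) ℝ)
    have heq := key a b ⟨haI, hbI, hat₀, ht₀b⟩ g hg1 hg2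
    have hgt : HasDerivAt g (odeW (A t) (g t)) t :=
      (hg2 t ⟨hat.le, htb.le⟩).hasDerivAt (Icc_mem_nhds hat htb)
    have hΦg : Φ =ᶠ[nhds t] g :=
      eventuallyEq_of_mem (Ioo_mem_nhds hat htb)
        (fun s hs => heq s (Ioo_subset_Icc_self hs))
    have hres := hgt.congr_of_eventuallyEq hΦg
    rwa [← heq t ⟨hat.le, htb.le⟩] at hres

end FundSolAux

open FundSolAux in
/-- Existence, uniqueness and invertibility of the fundamental solution of the linear
matrix ODE `Φ' = A·Φ`, `Φ(t₀) = 1`, on an open interval `I` (derivatives are taken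
entrywise). -/
theorem fundamental_solution (n : ℕ) (I : Set ℝ) (hIopen : IsOpen I)
    (hIconn : I.OrdConnected) (t₀ : ℝ) (ht₀ : t₀ ∈ I)
    (A : ℝ → Matrix (Fin n) (Fin n) ℝ) (hA : ContinuousOn A I) :
    ∃ Φ : ℝ → Matrix (Fin n) (Fin n) ℝ,
      (∀ t ∈ I, ∀ i j, HasDerivAt (fun s => Φ s i j) ((A t * Φ t) i j) t) ∧
      Φ t₀ = 1 ∧
      (∀ t ∈ I, IsUnit (Φ t)) ∧
      ∀ Ψ : ℝ → Matrix (Fin n) (Fin n) ℝ,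
        (∀ t ∈ I, ∀ i j, HasDerivAt (fun s => Ψ s i j) ((A t * Ψ t) i j) t) →
        Ψ t₀ = 1 → ∀ t ∈ I, Ψ t = Φ t := by
  classical
  obtain ⟨Φ, hΦ1, hΦd⟩ := exists_global hIopen hIconn ht₀ hA
  -- the adjoint system
  set A₂ : ℝ → Matrix (Fin n) (Fin n) ℝ := fun t => -(A t)ᵀ with hA₂def
  have hA₂c : ContinuousOn A₂ I := by
    have hc1 : Continuous fun B : Matrix (Fin n) (Fin n) ℝ => -Bᵀ :=
      continuous_pi fun i => continuous_pi fun j => (continuous_id.matrix_elem j i).neg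
    exact hc1.comp_continuousOn hA
  obtain ⟨Φ₂, hΦ₂1, hΦ₂d⟩ := exists_global hIopen hIconn ht₀ hA₂c
  -- entrywise derivatives of Φ
  have hΦentry : ∀ t ∈ I, ∀ i j,
      HasDerivAt (fun s => Φ s i j) ((A t * Matrix.of (Φ t)) i j) t := by
    intro t ht i j
    have h1 := hasDerivAt_pi.1 (hasDerivAt_pi.1 (hΦd t ht) i) j
    have h2 : (A t * Matrix.of (Φ t)) i j = odeW (A t) (Φ t) i j := by
      rw [Matrix.mul_apply]
      rfl
    rwa [h2]
  have hΦ₂entry : ∀ t ∈ I, ∀ i j,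
      HasDerivAt (fun s => Φ₂ s i j) (odeW (A₂ t) (Φ₂ t) i j) t := by
    intro t ht i j
    exact hasDerivAt_pi.1 (hasDerivAt_pi.1 (hΦ₂d t ht) i) j
  -- the product (Φ₂)ᵀ * Φ is constant on I
  have hzero : ∀ (i j : Fin n), ∀ s ∈ I,
      HasDerivAt (fun u => ∑ k, Φ₂ u k i * Φ u k j) 0 s := by
    intro i j s hs
    have h1 : ∀ k : Fin n, HasDerivAt (fun u => Φ₂ u k i) (odeW (A₂ s) (Φ₂ s) k i) s :=
      fun k => hΦ₂entry s hs k i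
    have h2 : ∀ k : Fin n, HasDerivAt (fun u => Φ u k j) (odeW (A s) (Φ s) k j) s := by
      intro k
      have := hΦentry s hs k j
      have he : (A s * Matrix.of (Φ s)) k j = odeW (A s) (Φ s) k j := by
        rw [Matrix.mul_apply]; rfl
      rwa [he] at this
    have h3 := HasDerivAt.sum (u := Finset.univ)
      (A := fun k u => Φ₂ u k i * Φ u k j)
      (A' := fun k => odeW (A₂ s) (Φ₂ s) k i * Φ s k j + Φ₂ s k i * odeW (A s) (Φ s) k j)
      (fun k _ => (h1 k).mul (h2 k))
    have h4 : (∑ k, (odeW (A₂ s) (Φ₂ s) k i * Φ s k j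
        + Φ₂ s k i * odeW (A s) (Φ s) k j)) = 0 := by
      rw [Finset.sum_add_distrib]
      have e1 : (∑ k, odeW (A₂ s) (Φ₂ s) k i * Φ s k j)
          = -∑ k, ∑ l, A s l k * Φ₂ s l i * Φ s k j := by
        rw [← Finset.sum_neg_distrib]
        refine Finset.sum_congr rfl fun k _ => ?_
        simp only [odeW, hA₂def, Matrix.neg_apply, Matrix.transpose_apply]
        rw [Finset.sum_mul, ← Finset.sum_neg_distrib]
        refine Finset.sum_congr rfl fun l _ => ?_
        ring
      have e2 : (∑ k, Φ₂ s k i * odeW (A s) (Φ s) k j)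
          = ∑ k, ∑ l, A s l k * Φ₂ s l i * Φ s k j := by
        rw [Finset.sum_comm (s := Finset.univ) (t := Finset.univ)
          (f := fun k l => A s l k * Φ₂ s l i * Φ s k j)]
        refine Finset.sum_congr rfl fun k _ => ?_
        simp only [odeW]
        rw [Finset.mul_sum]
        refine Finset.sum_congr rfl fun l _ => ?_
        ring
      rw [e1, e2]
      ring
    rwa [h4, Finset.sum_fn] at h3
  have hconst : ∀ t ∈ I, ∀ i j : Fin n,
      (∑ k, Φ₂ t k i * Φ t k j) = (∑ k, Φ₂ t₀ k i * Φ t₀ k j) := by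
    intro t ht i j
    rcases le_total t₀ t with h | h
    · have hsub : Icc t₀ t ⊆ I := hIconn.out ht₀ ht
      exact constant_of_has_deriv_right_zero
        (fun s hs => ((hzero i j s (hsub hs)).continuousAt).continuousWithinAt)
        (fun s hs => (hzero i j s (hsub (Ico_subset_Icc_self hs))).hasDerivWithinAt)
        t (right_mem_Icc.2 h)
    · have hsub : Icc t t₀ ⊆ I := hIconn.out ht ht₀
      exact (constant_of_has_deriv_right_zero
        (fun s hs => ((hzero i j s (hsub hs)).continuousAt).continuousWithinAt)
        (fun s hs => (hzero i j s (hsub (Ico_subset_Icc_self hs))).hasDerivWithinAt)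
        t₀ (right_mem_Icc.2 h)).symm
  have hinit : ∀ i j : Fin n,
      (∑ k, Φ₂ t₀ k i * Φ t₀ k j) = (1 : Matrix (Fin n) (Fin n) ℝ) i j := by
    intro i j
    rw [show (∑ k, Φ₂ t₀ k i * Φ t₀ k j)
        = ∑ k, (1 : Matrix (Fin n) (Fin n) ℝ) k i * (1 : Matrix (Fin n) (Fin n) ℝ) k j by
      refine Finset.sum_congr rfl fun k _ => ?_
      rw [show Φ₂ t₀ k i = (1 : Matrix (Fin n) (Fin n) ℝ) k i by rw [← hΦ₂1],
        show Φ t₀ k j = (1 : Matrix (Fin n) (Fin n) ℝ) k j by rw [← hΦ1]]]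
    have : (∑ k, (1 : Matrix (Fin n) (Fin n) ℝ) k i * (1 : Matrix (Fin n) (Fin n) ℝ) k j)
        = ((1 : Matrix (Fin n) (Fin n) ℝ)ᵀ * (1 : Matrix (Fin n) (Fin n) ℝ)) i j := by
      rw [Matrix.mul_apply]
      refine Finset.sum_congr rfl fun k _ => ?_
      rw [Matrix.transpose_apply]
    rw [this, Matrix.transpose_one, Matrix.one_mul]
  refine ⟨fun t => Matrix.of (Φ t), ?_, ?_, ?_, ?_⟩
  · intro t ht i j
    exact hΦentry t ht i j
  · show Matrix.of (Φ t₀) = 1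
    rw [hΦ1]
    rfl
  · intro t ht
    have hmul : (Matrix.of (Φ₂ t))ᵀ * Matrix.of (Φ t) = 1 := by
      ext i j
      rw [Matrix.mul_apply]
      simp only [Matrix.transpose_apply, Matrix.of_apply]
      rw [hconst t ht i j, hinit i j]
    exact ⟨⟨Matrix.of (Φ t), (Matrix.of (Φ₂ t))ᵀ, mul_eq_one_comm.mp hmul, hmul⟩, rfl⟩
  · intro Ψ hΨd hΨ1 t ht
    set Ψp : ℝ → Fin n → Fin n → ℝ := fun u i j => Ψ u i j with hΨpdef
    have h1 : ∀ s ∈ I, HasDerivAt Ψp (odeW (A s) (Ψp s)) s := by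
      intro s hs
      apply hasDerivAt_pi.2
      intro i
      apply hasDerivAt_pi.2
      intro j
      have := hΨd s hs i j
      have he : (A s * Ψ s) i j = odeW (A s) (Ψp s) i j := by
        rw [Matrix.mul_apply]
        rfl
      rwa [he] at this
    have heq0 : Ψp t₀ = Φ t₀ := by
      funext i j
      show Ψ t₀ i j = Φ t₀ i j
      rw [hΨ1, show Φ t₀ i j = (1 : Matrix (Fin n) (Fin n) ℝ) i j by rw [← hΦ1]]
    have := unique_global hIconn ht₀ hA h1 hΦd heq0 t ht
    ext i j
    exact congrFun (congrFun this i) j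
end
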